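/- arXiv:2012.11414 — 2 statements merged into one kernel-verified Lean document; each statement's English description precedes it below -/
import Mathlib

section
/- Consider a finite directed graph with vertex subsets X̄, C̄, and a set N with a distinguished vertex w_i ∈ N. Suppose: (1) b_{X̄ → N ∪ C̄} = b_{X̄ → (N∖{w_i}) ∪ C̄} + 1, and (2) b_{X̄ → (N∖{w_i}) ∪ C̄} = b_{X̄ → C̄}, where b denotes the maximum number of pairwise vertex-disjoint directed paths. Then every minimum X̄ – ((N∖{w_i}) ∪ C̄) disconnecting set D satisfies: b_{X̄ → {w_i} ∪ D} = |D| + 1 and b_{D → C̄} = |D|. -/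
/-!
Menger's theorem, in the form "if every `A`–`B` disconnecting set has at least `k` vertices then
there are `k` disjoint `A`–`B` paths", is proved by induction on the set of edges. Delete an edge
`uv`. If the smaller graph still has no disconnecting set of fewer than `k` vertices, induction
applies. Otherwise it has one, `S`, and then `S ∪ {u}` and `S ∪ {v}` are minimum disconnecting
sets of the whole graph. Every disconnecting set between `A` and `S ∪ {u}`, or between `S ∪ {v}`
and `B`, in the smaller graph disconnects `A` from `B` in the whole graph, so induction gives `k`
disjoint paths on either side. These two path systems can only meet in `S`, and they are joined
there and along `uv`.

Menger's theorem together with the trivial bound (disjoint paths need distinct vertices of any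
disconnecting set) gives `b_{X̄ → (N∖{wᵢ}) ∪ C̄} = |D|`. So there are `|D| + 1` disjoint paths from
`X̄` to `N ∪ C̄` and `|D|` from `X̄` to `C̄`. Each of them passes through `{wᵢ} ∪ D`, respectively
`D`, and cutting them at their first, respectively last, vertex there gives the lower bounds. The
sets `{wᵢ} ∪ D` and `D` themselves give the upper bounds.
-/

/-- A directed path from `A` to `B`: a nonempty duplicate-free list of vertices,
consecutive vertices joined by edges, starting in `A` and ending in `B`.
A single vertex counts as a path to itself. -/
def IsDiPath {V : Type*} (Adj : V → V → Prop) (A B : Set V) (l : List V) : Prop :=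
  l ≠ [] ∧ l.Chain' Adj ∧ l.Nodup ∧
    ∀ h : l ≠ [], l.head h ∈ A ∧ l.getLast h ∈ B

/-- There exist `k` pairwise vertex-disjoint directed paths from `A` to `B`. -/
def HasDisjointPaths {V : Type*} (Adj : V → V → Prop) (A B : Set V) (k : ℕ) : Prop :=
  ∃ f : Fin k → List V, (∀ i, IsDiPath Adj A B (f i)) ∧
    ∀ i j, i ≠ j → (f i).Disjoint (f j)

/-- The maximum number of pairwise vertex-disjoint directed paths from `A` to `B`. -/
noncomputable def maxDisjointPaths {V : Type*} (Adj : V → V → Prop) (A B : Set V) : ℕ :=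
  sSup {k | HasDisjointPaths Adj A B k}

/-- `D` is an `A`–`B` disconnecting set: every directed path from `A` to `B`
contains a vertex of `D`. -/
def IsDisconnecting {V : Type*} (Adj : V → V → Prop) (A B D : Set V) : Prop :=
  ∀ l, IsDiPath Adj A B l → ∃ v ∈ D, v ∈ l

section

variable {V : Type*} {Adj Adj' : V → V → Prop} {A A' B B' S : Set V} {l : List V} {k : ℕ}

def IsDiWalk (Adj : V → V → Prop) (A B : Set V) (l : List V) : Prop :=
  l.IsChain Adj ∧ (∃ a ∈ l.head?, a ∈ A) ∧ ∃ b ∈ l.getLast?, b ∈ B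

theorem isDiPath_iff : IsDiPath Adj A B l ↔ IsDiWalk Adj A B l ∧ l.Nodup := by
  cases l with
  | nil => simp [IsDiPath, IsDiWalk]
  | cons x xs =>
    simp only [IsDiPath, IsDiWalk, ne_eq, reduceCtorEq, not_false_eq_true, List.head_cons,
      List.head?_cons, Option.mem_def, Option.some.injEq, exists_eq_left',
      List.getLast?_eq_some_getLast (List.cons_ne_nil x xs), forall_true_left, true_and]
    exact ⟨fun ⟨hc, hnd, hA, hB⟩ => ⟨⟨hc, hA, hB⟩, hnd⟩,
      fun ⟨⟨hc, hA, hB⟩, hnd⟩ => ⟨hc, hnd, hA, hB⟩⟩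

theorem IsDiPath.mono (h : IsDiPath Adj A B l) (hAdj : Adj ≤ Adj') (hA : A ⊆ A')
    (hB : B ⊆ B') : IsDiPath Adj' A' B' l := by
  obtain ⟨⟨hc, ⟨a, ha, haA⟩, ⟨b, hb, hbB⟩⟩, hnd⟩ := isDiPath_iff.1 h
  exact isDiPath_iff.2 ⟨⟨hc.imp hAdj, ⟨a, ha, hA haA⟩, ⟨b, hb, hB hbB⟩⟩, hnd⟩

theorem IsDiPath.reverse (h : IsDiPath Adj A B l) : IsDiPath (flip Adj) B A l.reverse := by
  obtain ⟨⟨hc, hA, hB⟩, hnd⟩ := isDiPath_iff.1 h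
  exact isDiPath_iff.2 ⟨⟨List.isChain_reverse.2 hc, by simpa using hB, by simpa using hA⟩,
    List.nodup_reverse.2 hnd⟩

theorem IsDiWalk.exists_isDiPath_subset (h : IsDiWalk Adj A B l) :
    ∃ m ⊆ l, IsDiPath Adj A B m := by
  induction l generalizing A with
  | nil => simp [IsDiWalk] at h
  | cons x xs ih =>
    obtain ⟨hc, hA, hB⟩ := h
    simp only [List.head?_cons, Option.mem_def, Option.some.injEq, exists_eq_left'] at hA
    cases xs with
    | nil =>
      exact ⟨[x], List.Subset.refl _, isDiPath_iff.2 ⟨⟨hc, by simpa using hA, hB⟩, by simp⟩⟩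
    | cons y ys =>
      obtain ⟨m, hm, hmp⟩ := ih (A := {y}) ⟨hc.tail, by simp, by simpa using hB⟩
      obtain ⟨⟨hmc, hmy, hmB⟩, hmnd⟩ := isDiPath_iff.1 hmp
      by_cases hxm : x ∈ m
      -- `x` recurs on the path found for the tail: restart that path at `x`
      · obtain ⟨m₁, m₂, rfl⟩ := List.append_of_mem hxm
        refine ⟨x :: m₂, fun z hz => List.mem_cons_of_mem x (hm (List.mem_append_right _ hz)),
          isDiPath_iff.2 ⟨⟨hmc.right_of_append, by simpa using hA, by simpa using hmB⟩,
            hmnd.sublist (List.sublist_append_right _ _)⟩⟩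
      · refine ⟨x :: m, List.cons_subset_cons x hm,
          isDiPath_iff.2 ⟨⟨?_, by simpa using hA, ?_⟩, List.nodup_cons.2 ⟨hxm, hmnd⟩⟩⟩
        · refine hmc.cons fun z hz => ?_
          obtain ⟨y', hy', hyy'⟩ := hmy
          obtain rfl : z = y := (Option.mem_unique hz hy').trans hyy'
          exact (List.isChain_cons_cons.1 hc).1
        · obtain ⟨b, hb, hbB⟩ := hmB
          exact ⟨b, by cases m <;> simp_all [List.getLast?_cons], hbB⟩

theorem IsDisconnecting.exists_mem_of_isDiWalk {D : Set V} (hD : IsDisconnecting Adj A B D)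
    (h : IsDiWalk Adj A B l) : ∃ v ∈ D, v ∈ l := by
  obtain ⟨m, hm, hmp⟩ := h.exists_isDiPath_subset
  obtain ⟨v, hvD, hv⟩ := hD m hmp
  exact ⟨v, hvD, hm hv⟩

theorem IsDisconnecting.reverse {D : Set V} (hD : IsDisconnecting Adj A B D) :
    IsDisconnecting (flip Adj) B A D := fun l hl => by
  simpa using hD l.reverse hl.reverse

theorem IsDisconnecting.mono {D D' : Set V} (hD : IsDisconnecting Adj A B D) (hB : B' ⊆ B)
    (hDD' : D ⊆ D') : IsDisconnecting Adj A B' D' := fun l hl => by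
  obtain ⟨v, hv, hvl⟩ := hD l (hl.mono le_rfl subset_rfl hB)
  exact ⟨v, hDD' hv, hvl⟩

theorem isDisconnecting_left : IsDisconnecting Adj A B A := fun l hl => by
  obtain ⟨⟨-, ⟨a, ha, haA⟩, -⟩, -⟩ := isDiPath_iff.1 hl
  exact ⟨a, haA, List.mem_of_mem_head? ha⟩

theorem isDisconnecting_right : IsDisconnecting Adj A B B := fun l hl => by
  obtain ⟨⟨-, -, ⟨b, hb, hbB⟩⟩, -⟩ := isDiPath_iff.1 hl
  exact ⟨b, hbB, List.mem_of_mem_getLast? hb⟩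

theorem IsDisconnecting.union {B₁ B₂ D₁ D₂ : Set V} (h₁ : IsDisconnecting Adj A B₁ D₁)
    (h₂ : IsDisconnecting Adj A B₂ D₂) : IsDisconnecting Adj A (B₁ ∪ B₂) (D₁ ∪ D₂) := by
  intro l hl
  obtain ⟨⟨hc, hA, b, hb, hbB⟩, hnd⟩ := isDiPath_iff.1 hl
  rcases hbB with hbB | hbB
  · obtain ⟨v, hv, hvl⟩ := h₁ l (isDiPath_iff.2 ⟨⟨hc, hA, b, hb, hbB⟩, hnd⟩)
    exact ⟨v, Or.inl hv, hvl⟩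
  · obtain ⟨v, hv, hvl⟩ := h₂ l (isDiPath_iff.2 ⟨⟨hc, hA, b, hb, hbB⟩, hnd⟩)
    exact ⟨v, Or.inr hv, hvl⟩

theorem HasDisjointPaths.reverse (h : HasDisjointPaths Adj A B k) :
    HasDisjointPaths (flip Adj) B A k := by
  obtain ⟨f, hf, hd⟩ := h
  exact ⟨fun i => (f i).reverse, fun i => (hf i).reverse, fun i j hij => by
    simpa [List.disjoint_reverse_left, List.disjoint_reverse_right] using hd i j hij⟩

theorem HasDisjointPaths.mono (h : HasDisjointPaths Adj A B k) (hAdj : Adj ≤ Adj') {j : ℕ}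
    (hjk : j ≤ k) : HasDisjointPaths Adj' A B j := by
  obtain ⟨f, hf, hd⟩ := h
  exact ⟨fun i => f (Fin.castLE hjk i), fun i => (hf _).mono hAdj subset_rfl subset_rfl,
    fun i i' hii' => hd _ _ ((Fin.castLE_injective hjk).ne hii')⟩

theorem hasDisjointPaths_of_finset {ι : Type*} (X : Finset ι) (f : ι → List V)
    (hf : ∀ i ∈ X, IsDiPath Adj A B (f i))
    (hd : (X : Set ι).Pairwise fun i j => (f i).Disjoint (f j)) :
    HasDisjointPaths Adj A B X.card := by
  refine ⟨fun i => f (X.equivFin.symm i), fun i => hf _ (X.equivFin.symm i).2,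
    fun i i' hii' => hd (X.equivFin.symm i).2 (X.equivFin.symm i').2 ?_⟩
  exact Subtype.coe_injective.ne (X.equivFin.symm.injective.ne hii')

theorem HasDisjointPaths.le_card {D : Finset V} (h : HasDisjointPaths Adj A B k)
    (hD : IsDisconnecting Adj A B D) : k ≤ D.card := by
  obtain ⟨f, hf, hd⟩ := h
  choose g hgD hgf using fun i => hD (f i) (hf i)
  have hg : Function.Injective fun i => (⟨g i, hgD i⟩ : D) := fun i i' hii' => by
    by_contra hne
    have : g i = g i' := congrArg Subtype.val hii'
    exact hd i i' hne (hgf i) (this ▸ hgf i')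
  simpa using Fintype.card_le_of_injective _ hg

section maxDisjointPaths

variable [Finite V]

theorem bddAbove_hasDisjointPaths (Adj : V → V → Prop) (A B : Set V) :
    BddAbove {k | HasDisjointPaths Adj A B k} := by
  have := Fintype.ofFinite V
  exact ⟨Fintype.card V, fun k hk => by
    simpa using hk.le_card (D := Finset.univ) (isDisconnecting_left.mono subset_rfl (by simp))⟩

theorem hasDisjointPaths_maxDisjointPaths (Adj : V → V → Prop) (A B : Set V) :
    HasDisjointPaths Adj A B (maxDisjointPaths Adj A B) :=
  Nat.sSup_mem (s := {k | HasDisjointPaths Adj A B k})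
    ⟨0, Fin.elim0, fun i => i.elim0, fun i => i.elim0⟩ (bddAbove_hasDisjointPaths Adj A B)

theorem maxDisjointPaths_eq_of_le_card {D : Finset V} (h : HasDisjointPaths Adj A B k)
    (hD : IsDisconnecting Adj A B D) (hk : D.card ≤ k) : maxDisjointPaths Adj A B = k :=
  le_antisymm (((hasDisjointPaths_maxDisjointPaths Adj A B).le_card hD).trans hk)
    (le_csSup (bddAbove_hasDisjointPaths Adj A B) h)

end maxDisjointPaths

theorem List.exists_cons_suffix_of_exists_mem {α : Type*} {p : α → Prop} :
    ∀ {l : List α}, (∃ x ∈ l, p x) → ∃ a w, a :: w <:+ l ∧ p a ∧ ∀ y ∈ w, ¬p y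
  | [], h => by simp at h
  | x :: xs, h => by
    by_cases hxs : ∃ y ∈ xs, p y
    · obtain ⟨a, w, hsuf, ha, hw⟩ := exists_cons_suffix_of_exists_mem hxs
      exact ⟨a, w, hsuf.trans (suffix_cons x xs), ha, hw⟩
    · exact ⟨x, xs, suffix_refl _, (by simpa using h : p x ∨ ∃ y ∈ xs, p y).resolve_right hxs,
        fun y hy hpy => hxs ⟨y, hy, hpy⟩⟩

theorem IsDiPath.exists_suffix (h : IsDiPath Adj A B l) (hS : ∃ v ∈ S, v ∈ l) :
    ∃ a w, a :: w <:+ l ∧ a ∈ S ∧ (∀ y ∈ w, y ∉ S) ∧ IsDiPath Adj {a} B (a :: w) := by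
  obtain ⟨a, w, hsuf, ha, hw⟩ := List.exists_cons_suffix_of_exists_mem (p := (· ∈ S))
    (let ⟨v, hv, hvl⟩ := hS; ⟨v, hvl, hv⟩)
  obtain ⟨⟨hc, -, hB⟩, hnd⟩ := isDiPath_iff.1 h
  refine ⟨a, w, hsuf, ha, hw,
    isDiPath_iff.2 ⟨⟨hc.suffix hsuf, by simp, ?_⟩, hnd.sublist hsuf.sublist⟩⟩
  obtain ⟨r, rfl⟩ := hsuf
  simpa [List.getLast?_append] using hB

theorem IsDisconnecting.hasDisjointPaths_from (hS : IsDisconnecting Adj A B S)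
    (h : HasDisjointPaths Adj A B k) : HasDisjointPaths Adj S B k := by
  obtain ⟨f, hf, hd⟩ := h
  choose a w hsuf ha _ hp using fun i => (hf i).exists_suffix (hS _ (hf i))
  exact ⟨fun i => a i :: w i, fun i => (hp i).mono le_rfl (by simpa using ha i) subset_rfl,
    fun i j hij => List.disjoint_of_subset_left (hsuf i).subset
      (List.disjoint_of_subset_right (hsuf j).subset (hd i j hij))⟩

theorem IsDisconnecting.hasDisjointPaths_to (hS : IsDisconnecting Adj A B S)
    (h : HasDisjointPaths Adj A B k) : HasDisjointPaths Adj A S k :=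
  (hS.reverse.hasDisjointPaths_from h.reverse).reverse

theorem HasDisjointPaths.exists_starting {X : Finset V}
    (h : HasDisjointPaths Adj X B X.card) :
    ∃ U : V → List V, (∀ s ∈ X, IsDiPath Adj {s} B (s :: U s) ∧ ∀ y ∈ U s, y ∉ X) ∧
      (X : Set V).Pairwise fun s s' => (s :: U s).Disjoint (s' :: U s') := by
  obtain ⟨f, hf, hd⟩ := h
  choose a w hsuf ha hw hp using fun i => (hf i).exists_suffix (isDisconnecting_left _ (hf i))
  have hdisj : ∀ i j, i ≠ j → (a i :: w i).Disjoint (a j :: w j) := fun i j hij =>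
    List.disjoint_of_subset_left (hsuf i).subset
      (List.disjoint_of_subset_right (hsuf j).subset (hd i j hij))
  have hinj : Function.Injective a := fun i j hij => by
    by_contra hne
    exact hdisj i j hne List.mem_cons_self (hij ▸ List.mem_cons_self)
  have hsurj : Set.SurjOn a ↑(Finset.univ : Finset (Fin X.card)) X :=
    Finset.surjOn_of_injOn_of_card_le a (fun i _ => ha i) hinj.injOn
      (by rw [Finset.card_univ, Fintype.card_fin])
  have : ∀ s, ∃ u, s ∈ X → ∃ i, a i = s ∧ w i = u := fun s => by
    by_cases hs : s ∈ X
    · obtain ⟨i, -, hi⟩ := hsurj hs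
      exact ⟨w i, fun _ => ⟨i, hi, rfl⟩⟩
    · exact ⟨[], fun h => absurd h hs⟩
  choose U hU using this
  refine ⟨U, fun s hs => ?_, fun s hs s' hs' hss' => ?_⟩
  · obtain ⟨i, rfl, hi⟩ := hU s hs
    exact hi ▸ ⟨hp i, hw i⟩
  · obtain ⟨i, rfl, hi⟩ := hU s hs
    obtain ⟨j, rfl, hj⟩ := hU s' hs'
    exact hi ▸ hj ▸ hdisj i j (ne_of_apply_ne a hss')

theorem HasDisjointPaths.exists_ending {X : Finset V}
    (h : HasDisjointPaths Adj A X X.card) :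
    ∃ T : V → List V, (∀ s ∈ X, IsDiPath Adj A {s} (T s ++ [s]) ∧ ∀ y ∈ T s, y ∉ X) ∧
      (X : Set V).Pairwise fun s s' => (T s ++ [s]).Disjoint (T s' ++ [s']) := by
  obtain ⟨U, hU, hUd⟩ := h.reverse.exists_starting
  refine ⟨fun s => (U s).reverse, fun s hs => ?_, fun s hs s' hs' hss' => ?_⟩
  · exact ⟨by simpa using (hU s hs).1.reverse, by simpa using (hU s hs).2⟩
  · have h : (s :: U s).Disjoint (s' :: U s') := hUd hs hs' hss'
    rw [← List.disjoint_reverse_left, ← List.disjoint_reverse_right] at h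
    simpa using h

theorem IsDisconnecting.insert_of_incident {D : Set V} {u : V}
    (hD : IsDisconnecting Adj' A B D) (hAdj : ∀ a b, Adj a b → Adj' a b ∨ a = u ∨ b = u) :
    IsDisconnecting Adj A B (insert u D) := by
  intro l hl
  by_cases hu : u ∈ l
  · exact ⟨u, Set.mem_insert _ _, hu⟩
  obtain ⟨⟨hc, hA, hB⟩, hnd⟩ := isDiPath_iff.1 hl
  have hc' : l.IsChain Adj' := hc.imp_of_mem_imp fun a b ha hb hab =>
    (hAdj a b hab).resolve_right (by rintro (rfl | rfl) <;> contradiction)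
  obtain ⟨v, hv, hvl⟩ := hD l (isDiPath_iff.2 ⟨⟨hc', hA, hB⟩, hnd⟩)
  exact ⟨v, Set.mem_insert_of_mem _ hv, hvl⟩

theorem IsDisconnecting.of_insert_source {D : Set V} {v : V}
    (hD : IsDisconnecting Adj' (insert v S) B D) (hS : IsDisconnecting Adj' A B S)
    (hAdj : ∀ a b, Adj a b → Adj' a b ∨ b = v) : IsDisconnecting Adj A B D := by
  intro l hl
  obtain ⟨a, w, hsuf, ha, hw, hp⟩ := hl.exists_suffix
    (hS.insert_of_incident (fun a b h => (hAdj a b h).imp_right Or.inr) l hl)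
  obtain ⟨⟨hc, -, hB⟩, hnd⟩ := isDiPath_iff.1 hp
  have hc' : (a :: w).IsChain Adj' := hc.imp_of_mem_tail_imp fun x y _ hy hxy =>
    (hAdj x y hxy).resolve_right fun h => hw y hy (h ▸ Set.mem_insert _ _)
  obtain ⟨x, hx, hxl⟩ := hD _ (isDiPath_iff.2 ⟨⟨hc', ⟨a, rfl, ha⟩, hB⟩, hnd⟩)
  exact ⟨x, hx, hsuf.subset hxl⟩

theorem IsDisconnecting.of_insert_target {D : Set V} {u : V}
    (hD : IsDisconnecting Adj' A (insert u S) D) (hS : IsDisconnecting Adj' A B S)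
    (hAdj : ∀ a b, Adj a b → Adj' a b ∨ a = u) : IsDisconnecting Adj A B D :=
  (IsDisconnecting.of_insert_source (Adj := flip Adj) hD.reverse hS.reverse
    fun a b h => hAdj b a h).reverse

theorem IsDisconnecting.eq_of_mem_of_mem (hS : IsDisconnecting Adj A B S) {t w : List V}
    {a b x : V} (ht : IsDiPath Adj A {a} (t ++ [a])) (htS : ∀ y ∈ t, y ∉ S)
    (hw : IsDiPath Adj {b} B (b :: w)) (hwS : ∀ y ∈ w, y ∉ S)
    (hxt : x ∈ t ++ [a]) (hxw : x ∈ b :: w) : x = a ∧ x = b ∧ x ∈ S := by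
  obtain ⟨t₁, hpre, ht₁⟩ : ∃ t₁, t₁ ++ [x] <+: t ++ [a] ∧ t₁ ⊆ t := by
    rcases List.mem_append.1 hxt with hx | hx
    · obtain ⟨t₁, t₂, rfl⟩ := List.append_of_mem hx
      exact ⟨t₁, ⟨t₂ ++ [a], by simp⟩, List.subset_append_left _ _⟩
    · obtain rfl := List.mem_singleton.1 hx
      exact ⟨t, List.prefix_refl _, List.Subset.refl _⟩
  obtain ⟨w₂, hsuf, hw₂⟩ : ∃ w₂, x :: w₂ <:+ b :: w ∧ w₂ ⊆ w := by
    rcases List.mem_cons.1 hxw with rfl | hx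
    · exact ⟨w, List.suffix_refl _, List.Subset.refl _⟩
    · obtain ⟨w₁, w₂, rfl⟩ := List.append_of_mem hx
      exact ⟨w₂, ⟨b :: w₁, by simp⟩, fun y hy => by simp [hy]⟩
  obtain ⟨⟨htc, htA, -⟩, -⟩ := isDiPath_iff.1 ht
  obtain ⟨⟨hwc, -, hwB⟩, -⟩ := isDiPath_iff.1 hw
  -- `t` and `w` avoid `S`, so the walk below can only meet `S` in `x`
  have hwalk : IsDiWalk Adj A B (t₁ ++ x :: w₂) := by
    refine ⟨by simpa using (htc.prefix hpre).append_overlap (hwc.suffix hsuf) (by simp), ?_, ?_⟩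
    · obtain ⟨r, hr⟩ := hpre
      rw [← hr] at htA
      simpa [List.head?_append] using htA
    · obtain ⟨r, hr⟩ := hsuf
      rw [← hr] at hwB
      simpa [List.getLast?_append] using hwB
  obtain ⟨y, hyS, hy⟩ := hS.exists_mem_of_isDiWalk hwalk
  have hxS : x ∈ S := by
    rcases List.mem_append.1 hy with hy | hy
    · exact absurd hyS (htS y (ht₁ hy))
    · rcases List.mem_cons.1 hy with rfl | hy
      · exact hyS
      · exact absurd hyS (hwS y (hw₂ hy))
  refine ⟨?_, (List.mem_cons.1 hxw).resolve_right fun h => hwS x h hxS, hxS⟩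
  exact List.mem_singleton.1 ((List.mem_append.1 hxt).resolve_left fun h => htS x h hxS)

theorem IsDiPath.append_cons {t w : List V} {s : V} (ht : IsDiPath Adj A {s} (t ++ [s]))
    (hw : IsDiPath Adj {s} B (s :: w)) (hdisj : t.Disjoint (s :: w)) :
    IsDiPath Adj A B (t ++ s :: w) := by
  obtain ⟨⟨htc, htA, -⟩, htnd⟩ := isDiPath_iff.1 ht
  obtain ⟨⟨hwc, -, hwB⟩, hwnd⟩ := isDiPath_iff.1 hw
  refine isDiPath_iff.2 ⟨⟨by simpa using htc.append_overlap hwc (by simp), ?_, ?_⟩,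
    (htnd.sublist (List.sublist_append_left _ _)).append hwnd hdisj⟩
  · simpa [List.head?_append] using htA
  · simpa [List.getLast?_append] using hwB

theorem IsDiPath.cons {u v : V} {w : List V} (hw : IsDiPath Adj {v} B (v :: w))
    (huv : Adj u v) (hu : u ∉ v :: w) : IsDiPath Adj {u} B (u :: v :: w) := by
  obtain ⟨⟨hc, -, hB⟩, hnd⟩ := isDiPath_iff.1 hw
  exact isDiPath_iff.2 ⟨⟨hc.cons_cons huv, by simp, by simpa using hB⟩, hnd.cons hu⟩

theorem hasDisjointPaths_join {X : Finset V} {T U : V → List V}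
    (hT : ∀ s ∈ X, IsDiPath Adj A {s} (T s ++ [s]))
    (hU : ∀ s ∈ X, IsDiPath Adj {s} B (s :: U s))
    (hTd : (X : Set V).Pairwise fun s s' => (T s ++ [s]).Disjoint (T s' ++ [s']))
    (hUd : (X : Set V).Pairwise fun s s' => (s :: U s).Disjoint (s' :: U s'))
    (hTU : ∀ s ∈ X, ∀ s' ∈ X, ∀ x ∈ T s ++ [s], x ∈ s' :: U s' → x = s ∧ x = s') :
    HasDisjointPaths Adj A B X.card := by
  have hmem : ∀ s x, x ∈ T s ++ s :: U s → x ∈ T s ++ [s] ∨ x ∈ s :: U s := by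
    simp only [List.mem_append, List.mem_cons]
    tauto
  refine hasDisjointPaths_of_finset X (fun s => T s ++ s :: U s)
    (fun s hs => (hT s hs).append_cons (hU s hs) fun x hxt hxU => ?_)
    (fun s hs s' hs' hss' x hx hx' => ?_)
  · obtain ⟨rfl, -⟩ := hTU s hs s hs x (List.mem_append_left _ hxt) hxU
    exact (List.nodup_append.1 (isDiPath_iff.1 (hT x hs)).2).2.2 x hxt x
      (List.mem_singleton_self x) rfl
  · rcases hmem s x hx with h | h <;> rcases hmem s' x hx' with h' | h'
    · exact hTd hs hs' hss' h h'
    · obtain ⟨rfl, rfl⟩ := hTU s hs s' hs' x h h'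
      exact hss' rfl
    · obtain ⟨rfl, rfl⟩ := hTU s' hs' s hs x h' h
      exact hss' rfl
    · exact hUd hs hs' hss' h h'

theorem hasDisjointPaths_join_edge [DecidableEq V] {S : Finset V} {u v : V} {T U : V → List V}
    (hle : Adj' ≤ Adj) (huv : Adj u v) (hu : u ∉ S) (hv : v ∉ S)
    (hT : ∀ s ∈ insert u S, IsDiPath Adj' A {s} (T s ++ [s]) ∧ ∀ y ∈ T s, y ∉ insert u S)
    (hU : ∀ s ∈ insert v S, IsDiPath Adj' {s} B (s :: U s))
    (hTd : (↑(insert u S) : Set V).Pairwise fun s s' => (T s ++ [s]).Disjoint (T s' ++ [s']))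
    (hUd : (↑(insert v S) : Set V).Pairwise fun s s' => (s :: U s).Disjoint (s' :: U s'))
    (hcross : ∀ s ∈ insert u S, ∀ s' ∈ insert v S, ∀ x ∈ T s ++ [s], x ∈ s' :: U s' →
      x = s ∧ x = s' ∧ x ∈ S) :
    HasDisjointPaths Adj A B (insert u S).card := by
  have hu_mem : ∀ s ∈ insert v S, u ∉ s :: U s := fun s hs h =>
    hu (hcross u (Finset.mem_insert_self u S) s hs u (by simp) h).2.2
  -- the path ending at `u` is continued along `uv` by the path starting at `v`
  set U' := Function.update U u (v :: U v)
  have hU'u : U' u = v :: U v := Function.update_self ..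
  have hU'S : ∀ s ∈ S, U' s = U s := fun s hs =>
    Function.update_of_ne (ne_of_mem_of_not_mem hs hu) _ _
  refine hasDisjointPaths_join (U := U')
    (fun s hs => (hT s hs).1.mono hle subset_rfl subset_rfl) (fun s hs => ?_) hTd ?_
    (fun s hs s' hs' x hx hx' => ?_)
  · rcases Finset.mem_insert.1 hs with rfl | hs
    · simpa [U'] using ((hU v (Finset.mem_insert_self v S)).mono hle subset_rfl subset_rfl).cons
        huv (hu_mem v (Finset.mem_insert_self v S))
    · rw [hU'S s hs]
      exact (hU s (Finset.mem_insert_of_mem hs)).mono hle subset_rfl subset_rfl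
  · rw [Finset.coe_insert, Set.pairwise_insert]
    refine ⟨fun s hs s' hs' hss' => ?_, fun s hs _ => ?_⟩
    · show (s :: U' s).Disjoint (s' :: U' s')
      rw [hU'S s hs, hU'S s' hs']
      exact hUd (by simp [Finset.mem_coe.1 hs]) (by simp [Finset.mem_coe.1 hs']) hss'
    · have h : (u :: U' u).Disjoint (s :: U' s) := by
        rw [hU'u, hU'S s hs, List.disjoint_cons_left]
        exact ⟨hu_mem s (Finset.mem_insert_of_mem hs),
          hUd (by simp) (by simp [Finset.mem_coe.1 hs]) (ne_of_mem_of_not_mem hs hv).symm⟩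
      exact ⟨h, h.symm⟩
  · rcases Finset.mem_insert.1 hs' with rfl | hs'
    · rw [hU'u] at hx'
      rcases List.mem_cons.1 hx' with rfl | hx'
      · refine ⟨List.mem_singleton.1 ((List.mem_append.1 hx).resolve_left fun h => ?_), rfl⟩
        exact (hT s hs).2 x h (Finset.mem_insert_self x S)
      · obtain ⟨-, rfl, hxS⟩ := hcross s hs v (Finset.mem_insert_self v S) x hx hx'
        exact absurd hxS hv
    · rw [hU'S s' hs'] at hx'
      obtain ⟨h₁, h₂, -⟩ := hcross s hs s' (Finset.mem_insert_of_mem hs') x hx hx'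
      exact ⟨h₁, h₂⟩

theorem hasDisjointPaths_of_isDisconnecting_deleteEdge {S : Finset V} {u v : V}
    (hle : Adj' ≤ Adj) (hAdj : ∀ a b, Adj a b → Adj' a b ∨ a = u ∧ b = v) (huv : Adj u v)
    (hS : IsDisconnecting Adj' A B S) (hSk : S.card < k)
    (hk : ∀ D : Finset V, IsDisconnecting Adj A B D → k ≤ D.card)
    (ih : ∀ A' B' : Set V, (∀ D : Finset V, IsDisconnecting Adj' A' B' D → k ≤ D.card) →
      HasDisjointPaths Adj' A' B' k) :
    HasDisjointPaths Adj A B k := by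
  classical
  have hcard : ∀ x, IsDisconnecting Adj A B (insert x S) → x ∉ S ∧ (insert x S).card = k := by
    intro x hx
    have h₁ := hk (insert x S) (by simpa using hx)
    have h₂ := Finset.card_insert_le x S
    refine ⟨fun hxS => ?_, by omega⟩
    rw [Finset.insert_eq_of_mem hxS] at h₁
    omega
  obtain ⟨hu, hXu⟩ := hcard u <| hS.insert_of_incident fun a b h =>
    (hAdj a b h).imp_right fun h => Or.inl h.1
  obtain ⟨hv, hXv⟩ := hcard v <| hS.insert_of_incident fun a b h =>
    (hAdj a b h).imp_right fun h => Or.inr h.2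
  obtain ⟨T, hT, hTd⟩ := HasDisjointPaths.exists_ending (X := insert u S) <| hXu ▸
    ih A _ fun D hD => hk D <| IsDisconnecting.of_insert_target
      (by rwa [Finset.coe_insert] at hD) hS fun a b h => (hAdj a b h).imp_right And.left
  obtain ⟨U, hU, hUd⟩ := HasDisjointPaths.exists_starting (X := insert v S) <| hXv ▸
    ih _ B fun D hD => hk D <| IsDisconnecting.of_insert_source
      (by rwa [Finset.coe_insert] at hD) hS fun a b h => (hAdj a b h).imp_right And.right
  have hcross : ∀ s ∈ insert u S, ∀ s' ∈ insert v S, ∀ x ∈ T s ++ [s], x ∈ s' :: U s' →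
      x = s ∧ x = s' ∧ x ∈ S := fun s hs s' hs' x hx hx' =>
    hS.eq_of_mem_of_mem (hT s hs).1
      (fun y hy hyS => (hT s hs).2 y hy (Finset.mem_insert_of_mem hyS)) (hU s' hs').1
      (fun y hy hyS => (hU s' hs').2 y hy (Finset.mem_insert_of_mem hyS)) hx hx'
  exact hXu ▸ hasDisjointPaths_join_edge hle huv hu hv hT (fun s hs => (hU s hs).1) hTd hUd hcross

theorem isDiPath_singleton {a : V} (hA : a ∈ A) (hB : a ∈ B) : IsDiPath Adj A B [a] :=
  ⟨List.cons_ne_nil a [], List.isChain_singleton a, List.nodup_singleton a, fun _ => ⟨hA, hB⟩⟩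

theorem hasDisjointPaths_of_subset_inter (X : Finset V) (hX : ↑X ⊆ A ∩ B) :
    HasDisjointPaths Adj A B X.card :=
  hasDisjointPaths_of_finset X (fun a => [a])
    (fun a ha => isDiPath_singleton (hX ha).1 (hX ha).2) fun a _ b _ hab => by simpa using hab.symm

theorem isDisconnecting_inter_of_forall_not_adj (hAdj : ∀ a b, ¬Adj a b) :
    IsDisconnecting Adj A B (A ∩ B) := by
  intro l hl
  obtain ⟨⟨hc, ⟨a, ha, haA⟩, ⟨b, hb, hbB⟩⟩, -⟩ := isDiPath_iff.1 hl
  match l, hc with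
  | [x], _ => simp_all
  | x :: y :: _, hc => exact absurd (List.isChain_cons_cons.1 hc).1 (hAdj x y)

theorem hasDisjointPaths_of_forall_le_card [Finite V] (Adj : V → V → Prop) (A B : Set V)
    (k : ℕ) (h : ∀ D : Finset V, IsDisconnecting Adj A B D → k ≤ D.card) :
    HasDisjointPaths Adj A B k := by
  classical
  obtain ⟨E, hE⟩ : ∃ E : Finset (V × V), ∀ a b, Adj a b ↔ (a, b) ∈ E :=
    ⟨(Set.toFinite {p : V × V | Adj p.1 p.2}).toFinset, by simp⟩
  obtain rfl : Adj = fun a b => (a, b) ∈ E := funext₂ fun a b => propext (hE a b)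
  clear hE
  induction E using Finset.induction_on generalizing A B k with
  | empty =>
    have hAB := (A ∩ B).toFinite
    exact (hasDisjointPaths_of_subset_inter hAB.toFinset (by simp)).mono le_rfl
      (h _ (by simpa using isDisconnecting_inter_of_forall_not_adj (by simp)))
  | insert e E _ ih =>
    by_cases hE : ∀ D : Finset V, IsDisconnecting (fun a b => (a, b) ∈ E) A B D → k ≤ D.card
    · exact (ih A B k hE).mono (fun a b hab => Finset.mem_insert_of_mem hab) le_rfl
    · obtain ⟨S, hS, hSk⟩ := not_forall₂.1 hE
      exact hasDisjointPaths_of_isDisconnecting_deleteEdge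
        (fun a b hab => Finset.mem_insert_of_mem hab)
        (fun a b hab => by simpa [Prod.ext_iff, or_comm] using Finset.mem_insert.1 hab)
        (Finset.mem_insert_self e E) hS (not_le.1 hSk) h fun A' B' => ih A' B' k

end

theorem min_disconnecting_set_properties_general
    {V : Type*} [Fintype V] (Adj : V → V → Prop) (Xb Cb N : Set V)
    (wi : V)
    (h1 : maxDisjointPaths Adj Xb (N ∪ Cb) =
      maxDisjointPaths Adj Xb ((N \ {wi}) ∪ Cb) + 1)
    (h2 : maxDisjointPaths Adj Xb ((N \ {wi}) ∪ Cb) = maxDisjointPaths Adj Xb Cb) :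
    ∀ D : Finset V, IsDisconnecting Adj Xb ((N \ {wi}) ∪ Cb) ↑D →
      (∀ D' : Finset V, IsDisconnecting Adj Xb ((N \ {wi}) ∪ Cb) ↑D' →
        D.card ≤ D'.card) →
      maxDisjointPaths Adj Xb ({wi} ∪ ↑D) = D.card + 1 ∧
        maxDisjointPaths Adj (↑D) Cb = D.card := by
  classical
  intro D hD hDmin
  have hY : maxDisjointPaths Adj Xb ((N \ {wi}) ∪ Cb) = D.card :=
    maxDisjointPaths_eq_of_le_card (hasDisjointPaths_of_forall_le_card Adj _ _ _ hDmin) hD le_rfl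
  have hNC : HasDisjointPaths Adj Xb (N ∪ Cb) (D.card + 1) := by
    rw [← hY, ← h1]
    exact hasDisjointPaths_maxDisjointPaths Adj Xb (N ∪ Cb)
  have hC : HasDisjointPaths Adj Xb Cb D.card := by
    rw [← hY, h2]
    exact hasDisjointPaths_maxDisjointPaths Adj Xb Cb
  have hwD : IsDisconnecting Adj Xb (N ∪ Cb) ({wi} ∪ ↑D) :=
    (isDisconnecting_right.union hD).mono (by
      rw [← Set.union_assoc, Set.union_sdiff_self, Set.union_assoc]
      exact Set.subset_union_right) subset_rfl
  have hwD' : IsDisconnecting Adj Xb ({wi} ∪ ↑D) ↑(insert wi D) := by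
    rw [Finset.coe_insert, Set.insert_eq]
    exact isDisconnecting_right
  have hDC : IsDisconnecting Adj Xb Cb D := hD.mono Set.subset_union_right subset_rfl
  exact ⟨maxDisjointPaths_eq_of_le_card (hwD.hasDisjointPaths_to hNC) hwD'
      (Finset.card_insert_le wi D),
    maxDisjointPaths_eq_of_le_card (hDC.hasDisjointPaths_from hC) isDisconnecting_left le_rfl⟩

/-- Equivalence between the path-based identifiability condition and the
disconnecting-set condition: under the two path-counting hypotheses, every
minimum `X̄ – ((N \ {wᵢ}) ∪ C̄)` disconnecting set `D` satisfies
`b_{X̄ → {wᵢ} ∪ D} = |D| + 1` and `b_{D → C̄} = |D|`. -/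
theorem min_disconnecting_set_properties
    {V : Type*} [Fintype V] (Adj : V → V → Prop) (Xb Cb N : Set V)
    (wi : V) (hwi : wi ∈ N)
    (h1 : maxDisjointPaths Adj Xb (N ∪ Cb) =
      maxDisjointPaths Adj Xb ((N \ {wi}) ∪ Cb) + 1)
    (h2 : maxDisjointPaths Adj Xb ((N \ {wi}) ∪ Cb) = maxDisjointPaths Adj Xb Cb) :
    ∀ D : Finset V, IsDisconnecting Adj Xb ((N \ {wi}) ∪ Cb) ↑D →
      (∀ D' : Finset V, IsDisconnecting Adj Xb ((N \ {wi}) ∪ Cb) ↑D' →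
        D.card ≤ D'.card) →
      maxDisjointPaths Adj Xb ({wi} ∪ ↑D) = D.card + 1 ∧
        maxDisjointPaths Adj (↑D) Cb = D.card :=
  min_disconnecting_set_properties_general Adj Xb Cb N wi h1 h2
end

section
/- Let A be the adjacency-weight matrix of a finite directed acyclic graph on vertex set V over a commutative ring, so that A is nilpotent and T = (I−A)⁻¹ = I + A + A² + ⋯ exists, with T_{wv} equal to the sum over all directed paths from v to w of the product of edge weights. Let X, W, D ⊆ V and suppose every directed path from a vertex of X to a vertex of W contains a vertex of D. Then there exists a matrix K (with rows indexed by W and columns by D) such that T_{W,X} = K · T_{D,X}, where T_{W,X} and T_{D,X} denote the corresponding submatrices of T. -/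
open Finset Matrix

namespace List

variable {α : Type*}

lemma exists_cons_append_infix_of_pair_sublist {a : α} {l : List α} (h : [a, a] <+ l) :
    ∃ u : List α, a :: (u ++ [a]) <:+: l := by
  obtain ⟨r₁, r₂, rfl, h₁, h₂⟩ := cons_sublist_iff.mp h
  obtain ⟨s, s', rfl⟩ := append_of_mem h₁
  obtain ⟨u, t, rfl⟩ := append_of_mem (singleton_sublist.mp h₂)
  exact ⟨s' ++ u, s, t, by simp⟩

lemma IsChain.nodup_of_acyclic {r : α → α → Prop}
    (hacyc : ∀ l : List α, l.IsChain r → 2 ≤ l.length → l.head? ≠ l.getLast?)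
    {l : List α} (hl : l.IsChain r) : l.Nodup := by
  refine nodup_iff_sublist.mpr fun a ha => ?_
  obtain ⟨u, hu⟩ := exists_cons_append_infix_of_pair_sublist ha
  exact hacyc _ (hl.infix hu) (by simp) (by rw [← cons_append, getLast?_concat]; simp)

end List

lemma eq_mul_add_mul_of_one_sub_mul_eq_one {α : Type*} [Ring α] {a t p q s : α}
    (ht : (1 - a) * t = 1) (hpq : p + q = 1) (hs : s * (1 - q * a) = 1) :
    t = s * (q + p * t) := by
  have hat : a * t = t - 1 := by
    rw [sub_mul, one_mul] at ht
    rw [← ht, sub_sub_cancel]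
  obtain rfl : p = 1 - q := eq_sub_of_add_eq hpq
  calc t = s * (1 - q * a) * t := by rw [hs, one_mul]
    _ = s * (q + (1 - q) * t) := by
      rw [mul_assoc, sub_mul, one_mul, mul_assoc, hat]
      noncomm_ring

namespace Matrix

def coordProj {V R : Type*} [DecidableEq V] [Zero R] [One R] (s : Finset V) : Matrix V V R :=
  diagonal fun u => if u ∈ s then 1 else 0

variable {V R : Type*} [Fintype V] [DecidableEq V] [Semiring R]

lemma exists_isChain_of_pow_apply_ne_zero (M : Matrix V V R) {k : ℕ} {w v : V}
    (h : (M ^ k) w v ≠ 0) :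
    ∃ l : List V, (v :: l).IsChain (fun a b => M b a ≠ 0) ∧
      (v :: l).getLast (List.cons_ne_nil v l) = w ∧ l.length = k := by
  induction k generalizing v with
  | zero =>
    obtain rfl : w = v := by
      by_contra hne
      exact h (one_apply_ne hne)
    exact ⟨[], List.isChain_singleton _, rfl, rfl⟩
  | succ k ih =>
    rw [pow_succ, mul_apply] at h
    obtain ⟨u, -, hu⟩ := Finset.exists_ne_zero_of_sum_ne_zero h
    obtain ⟨l, hl, hlast, hlen⟩ := ih (left_ne_zero_of_mul hu)
    exact ⟨u :: l, List.isChain_cons_cons.mpr ⟨right_ne_zero_of_mul hu, hl⟩,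
      by rwa [List.getLast_cons_cons], by simp [hlen]⟩

lemma pow_card_eq_zero_of_isChain_nodup (M : Matrix V V R)
    (hnodup : ∀ l : List V, l.IsChain (fun a b => M b a ≠ 0) → l.Nodup) :
    M ^ Fintype.card V = 0 := by
  ext w v
  by_contra h
  obtain ⟨l, hl, -, hlen⟩ := M.exists_isChain_of_pow_apply_ne_zero h
  have hcard := (hnodup _ hl).length_le_card
  simp only [List.length_cons, hlen] at hcard
  omega

lemma coordProj_add_coordProj_compl (s : Finset V) :
    (coordProj s + coordProj sᶜ : Matrix V V R) = 1 := by
  rw [coordProj, coordProj, diagonal_add, ← diagonal_one]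
  congr 1
  funext u
  by_cases hu : u ∈ s <;> simp [hu]

lemma coordProj_mul_apply (s : Finset V) (M : Matrix V V R) (i j : V) :
    ((coordProj s : Matrix V V R) * M) i j = if i ∈ s then M i j else 0 := by
  rw [coordProj, diagonal_mul, ite_mul, one_mul, zero_mul]

lemma coordProj_mul_apply_ne_zero {s : Finset V} {M : Matrix V V R} {i j : V} :
    ((coordProj s : Matrix V V R) * M) i j ≠ 0 ↔ i ∈ s ∧ M i j ≠ 0 := by
  rw [coordProj_mul_apply, ite_ne_right_iff]

lemma mul_coordProj_apply (s : Finset V) (M : Matrix V V R) (i j : V) :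
    (M * (coordProj s : Matrix V V R)) i j = if j ∈ s then M i j else 0 := by
  rw [coordProj, mul_diagonal, mul_ite, mul_one, mul_zero]

lemma submatrix_mul_coordProj_mul {m n : Type*} (S T : Matrix V V R) (s : Finset V)
    (f : m → V) (g : n → V) :
    (S * coordProj s * T).submatrix f g =
      S.submatrix f ((↑) : s → V) * T.submatrix ((↑) : s → V) g := by
  ext i j
  rw [submatrix_apply, mul_apply, mul_apply]
  simp only [mul_coordProj_apply, ite_mul, zero_mul, sum_ite_mem, univ_inter, submatrix_apply]
  exact (Finset.sum_coe_sort s fun u => S (f i) u * T u (g j)).symm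

lemma pow_coordProj_compl_mul_apply_eq_zero (A : Matrix V V R) {X W : Set V} {D : Finset V}
    (hnodup : ∀ l : List V, l.IsChain (fun v w => A w v ≠ 0) → l.Nodup)
    (hD : ∀ l : List V, IsDiPath (fun v w => A w v ≠ 0) X W l → ∃ v ∈ D, v ∈ l)
    {w x : V} (hw : w ∈ W) (hx : x ∈ X) (hxD : x ∉ D) (k : ℕ) :
    (((coordProj Dᶜ : Matrix V V R) * A) ^ k) w x = 0 := by
  by_contra h
  obtain ⟨l, hl, hlast, -⟩ := exists_isChain_of_pow_apply_ne_zero _ h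
  simp only [coordProj_mul_apply_ne_zero, mem_compl] at hl
  have havoid : ∀ u ∈ x :: l, u ∉ D :=
    List.forall_mem_cons.mpr ⟨hxD, hl.cons_induction _ _ (fun _ _ hab _ => hab.1) hxD⟩
  have hA : (x :: l).IsChain (fun v w => A w v ≠ 0) := hl.imp fun _ _ hab => hab.2
  obtain ⟨d, hdD, hdl⟩ :=
    hD _ ⟨List.cons_ne_nil _ _, hA, hnodup _ hA, fun _ => ⟨hx, hlast ▸ hw⟩⟩
  exact havoid d hdl hdD

end Matrix

theorem transfer_factors_through_disconnecting_set_general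
    {V : Type*} [Fintype V] [DecidableEq V] {R : Type*} [CommRing R]
    (A T : Matrix V V R)
    (hacyc : ∀ l : List V, l.Chain' (fun v w => A w v ≠ 0) →
      2 ≤ l.length → l.head? ≠ l.getLast?)
    (hT : (1 - A) * T = 1 ∧ T * (1 - A) = 1)
    (X W D : Finset V)
    (hD : ∀ l : List V, IsDiPath (fun v w => A w v ≠ 0) ↑X ↑W l → ∃ v ∈ D, v ∈ l) :
    ∃ K : Matrix W D R,
      T.submatrix (fun w : W => (w : V)) (fun x : X => (x : V)) =
        K * T.submatrix (fun d : D => (d : V)) (fun x : X => (x : V)) := by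
  have hnodup (l : List V) : l.IsChain (fun v w => A w v ≠ 0) → l.Nodup :=
    List.IsChain.nodup_of_acyclic hacyc
  set B : Matrix V V R := coordProj Dᶜ * A
  have hB : B ^ Fintype.card V = 0 := B.pow_card_eq_zero_of_isChain_nodup fun l hl =>
    hnodup l (hl.imp fun _ _ hab => (coordProj_mul_apply_ne_zero.mp hab).2)
  set S := ∑ k ∈ range (Fintype.card V), B ^ k with hSdef
  have hS : S * (1 - B) = 1 := by rw [geom_sum_mul_neg, hB, sub_zero]
  have hsplit : T = S * (coordProj Dᶜ + coordProj D * T) :=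
    eq_mul_add_mul_of_one_sub_mul_eq_one hT.1 (coordProj_add_coordProj_compl D) hS
  have hvanish :
      (S * coordProj Dᶜ).submatrix (fun w : W => (w : V)) (fun x : X => (x : V)) = 0 := by
    ext w x
    rw [submatrix_apply, mul_coordProj_apply]
    split_ifs with hxD
    · rw [mem_compl] at hxD
      rw [hSdef, Matrix.sum_apply, Matrix.zero_apply]
      exact sum_eq_zero fun k _ =>
        pow_coordProj_compl_mul_apply_eq_zero A hnodup hD w.2 x.2 hxD k
    · rfl
  refine ⟨S.submatrix (↑) (↑), ?_⟩
  conv_lhs => rw [hsplit, mul_add, ← mul_assoc, submatrix_add, Pi.add_apply, Pi.add_apply,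
    hvanish, zero_add]
  exact submatrix_mul_coordProj_mul S T D _ _

/-- Factorization of the transfer matrix through a disconnecting set in an
acyclic weighted digraph: if `A` is the (nilpotent) adjacency-weight matrix of
an acyclic directed graph (edge `v → w` iff `A w v ≠ 0`), `T = (I - A)⁻¹`, and
every directed path from `X` to `W` contains a vertex of `D`, then
`T_{W,X} = K * T_{D,X}` for some matrix `K`. -/
theorem transfer_factors_through_disconnecting_set
    {V : Type*} [Fintype V] [DecidableEq V] {R : Type*} [CommRing R]
    (A T : Matrix V V R)
    (hnil : IsNilpotent A)
    (hacyc : ∀ l : List V, l.Chain' (fun v w => A w v ≠ 0) →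
      2 ≤ l.length → l.head? ≠ l.getLast?)
    (hT : (1 - A) * T = 1 ∧ T * (1 - A) = 1)
    (X W D : Finset V)
    (hD : ∀ l : List V, IsDiPath (fun v w => A w v ≠ 0) ↑X ↑W l → ∃ v ∈ D, v ∈ l) :
    ∃ K : Matrix W D R,
      T.submatrix (fun w : W => (w : V)) (fun x : X => (x : V)) =
        K * T.submatrix (fun d : D => (d : V)) (fun x : X => (x : V)) :=
  transfer_factors_through_disconnecting_set_general A T hacyc hT X W D hD
end
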